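/- arXiv:1902.05449 — 2 statements merged into one kernel-verified Lean document; each statement's English description precedes it below -/
import Mathlib

section
/- For f(x,u,p,q) = 3q²/(2p) with p ≠ 0, the Wünschmann relative invariant I₁ = 4f_q³ + 18f_q(f_p − D_x f_q) + 9D_x²f_q − 27D_x f_p + 54f_u vanishes identically, where D_x = ∂_x + p∂_u + q∂_p + f∂_q is the total derivative operator along solutions of u''' = f. -/
noncomputable section

/-- partial derivative in the first variable `x` -/
def pX (g : ℝ → ℝ → ℝ → ℝ → ℝ) (x u p q : ℝ) : ℝ := deriv (fun t => g t u p q) x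
/-- partial derivative in the second variable `u` -/
def pU (g : ℝ → ℝ → ℝ → ℝ → ℝ) (x u p q : ℝ) : ℝ := deriv (fun t => g x t p q) u
/-- partial derivative in the third variable `p` -/
def pP (g : ℝ → ℝ → ℝ → ℝ → ℝ) (x u p q : ℝ) : ℝ := deriv (fun t => g x u t q) p
/-- partial derivative in the fourth variable `q` -/
def pQ (g : ℝ → ℝ → ℝ → ℝ → ℝ) (x u p q : ℝ) : ℝ := deriv (fun t => g x u p t) q

/-- total derivative operator `D_x = ∂_x + p ∂_u + q ∂_p + f ∂_q` -/
def Dx (f g : ℝ → ℝ → ℝ → ℝ → ℝ) (x u p q : ℝ) : ℝ :=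
  pX g x u p q + p * pU g x u p q + q * pP g x u p q + f x u p q * pQ g x u p q

/-- the Wünschmann relative invariant -/
def I1 (f : ℝ → ℝ → ℝ → ℝ → ℝ) (x u p q : ℝ) : ℝ :=
  4 * (pQ f x u p q) ^ 3 + 18 * pQ f x u p q * (pP f x u p q - Dx f (pQ f) x u p q)
    + 9 * Dx f (Dx f (pQ f)) x u p q - 27 * Dx f (pP f) x u p q + 54 * pU f x u p q


/-! The function `f = 3q²/(2p)` and all derivatives entering `I₁` are monomials `c q^m p^k`
with `k ≤ 0`. On these, `D_x = q ∂_p + f ∂_q` acts by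
`c q^m p^k ↦ c (k + 3m/2) q^(m+1) p^(k-1)`, so every term of `I₁` is a multiple of `q³/p³`,
and the coefficients cancel: `108 - 162 + 27/2 + 81/2 = 0`.
Since `deriv` and `zpow` vanish at `p = 0`, the monomial rules hold as identities of functions,
which lets them be composed by rewriting. -/

def pqMonomial (c : ℝ) (m : ℕ) (k : ℤ) : ℝ → ℝ → ℝ → ℝ → ℝ :=
  fun _ _ p q => c * q ^ m * p ^ k

section

variable (c : ℝ) (m : ℕ) (k : ℤ)

lemma pX_pqMonomial : pX (pqMonomial c m k) = 0 := by
  funext x u p q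
  simp [pX, pqMonomial]

lemma pU_pqMonomial : pU (pqMonomial c m k) = 0 := by
  funext x u p q
  simp [pU, pqMonomial]

lemma pP_pqMonomial : pP (pqMonomial c m k) = pqMonomial (c * k) m (k - 1) := by
  funext x u p q
  simp only [pP, pqMonomial, deriv_const_mul_field, deriv_zpow]
  ring

lemma pQ_pqMonomial : pQ (pqMonomial c m k) = pqMonomial (c * m) (m - 1) k := by
  funext x u p q
  simp only [pQ, pqMonomial, deriv_mul_const_field, deriv_const_mul_field, deriv_pow_field]
  ring

lemma Dx_pqMonomial (a : ℝ) (hk : k ≤ 0) :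
    Dx (pqMonomial a 2 (-1)) (pqMonomial c m k) =
      pqMonomial (c * (k + a * m)) (m + 1) (k - 1) := by
  funext x u p q
  -- `k ≤ 0` is what makes this hold at `p = 0` as well
  have hp : p ^ (-1 : ℤ) * p ^ k = p ^ (k - 1) := by
    rw [← zpow_add' (.inr (.inl (by omega))), neg_add_eq_sub]
  have hq : q ^ 2 * (m * q ^ (m - 1)) = m * q ^ (m + 1) := by
    cases m <;> simp only [Nat.cast_zero, Nat.cast_succ, add_tsub_cancel_right] <;> ring
  simp only [Dx, pX_pqMonomial, pU_pqMonomial, pP_pqMonomial, pQ_pqMonomial, pqMonomial,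
    Pi.zero_apply]
  linear_combination (a * c) * p ^ (-1 : ℤ) * p ^ k * hq + (a * c * m * q ^ (m + 1)) * hp

end

theorem stmt_1 :
    ∀ x u p q : ℝ, p ≠ 0 →
      I1 (fun _ _ p q => 3 * q ^ 2 / (2 * p)) x u p q = 0 := by
  intro x u p q _
  have hf : (fun _ _ p q => 3 * q ^ 2 / (2 * p) : ℝ → ℝ → ℝ → ℝ → ℝ) =
      pqMonomial (3 / 2) 2 (-1) := by
    funext x u p q
    simp only [pqMonomial, zpow_neg_one]
    ring
  rw [hf]
  simp (disch := norm_num) only [I1, pQ_pqMonomial, pP_pqMonomial, pU_pqMonomial,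
    Dx_pqMonomial]
  norm_num [pqMonomial]
  ring
end
end

section
/- Suppose u : I → ℝ is smooth on an open interval I and satisfies (k₁x + k₂)² + (k₁u(x) + k₃)² = 1 for all x ∈ I, for constants k₁ ≠ 0, k₂, k₃, and suppose k₁u(x) + k₃ ≠ 0 on I. Then u satisfies the ODE u''' = 3u'(u'')²/(1 + (u')²) on I. -/
/-!
Put `v = k₁ u + k₃`. Differentiating the circle equation `(k₁ x + k₂)² + v² = 1` three times on
the open set `I` gives `k₁ x + k₂ + u' v = 0`, then `u'' v + k₁ (1 + u'²) = 0`, then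
`u''' v + 3 k₁ u' u'' = 0`. Eliminating `k₁` between the last two relations and cancelling
`v ≠ 0` yields `u''' (1 + u'²) = 3 u' u''²`.
-/

open Set Filter Topology

theorem HasDerivAt.eq_zero_of_eventuallyEq_zero {𝕜 F : Type*} [NontriviallyNormedField 𝕜]
    [NormedAddCommGroup F] [NormedSpace 𝕜 F] {g : 𝕜 → F} {g' : F} {x : 𝕜}
    (h : HasDerivAt g g' x) (hg : g =ᶠ[𝓝 x] 0) : g' = 0 :=
  h.unique ((hasDerivAt_const x (0 : F)).congr_of_eventuallyEq hg)

theorem ContDiffOn.hasDerivAt_iteratedDeriv {𝕜 F : Type*} [NontriviallyNormedField 𝕜]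
    [NormedAddCommGroup F] [NormedSpace 𝕜 F] {f : 𝕜 → F} {s : Set 𝕜} {n : WithTop ℕ∞} {m : ℕ}
    {x : 𝕜} (hf : ContDiffOn 𝕜 n f s) (hs : IsOpen s) (hmn : m < n) (hx : x ∈ s) :
    HasDerivAt (iteratedDeriv m f) (iteratedDeriv (m + 1) f x) x := by
  have hnhds : s ∈ 𝓝 x := hs.mem_nhds hx
  have hdiff : DifferentiableAt 𝕜 (iteratedDerivWithin m f s) x :=
    (hf.differentiableOn_iteratedDerivWithin hmn hs.uniqueDiffOn x hx).differentiableAt hnhds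
  rw [iteratedDeriv_succ]
  exact (hdiff.congr_of_eventuallyEq
    (eventuallyEq_of_mem hnhds (iteratedDerivWithin_of_isOpen hs)).symm).hasDerivAt

section CircleArc

variable {I : Set ℝ} {u u₁ u₂ u₃ : ℝ → ℝ} {k₁ k₂ k₃ : ℝ}

theorem circleArc_deriv_one (hI : IsOpen I) (hu : ∀ x ∈ I, HasDerivAt u (u₁ x) x)
    (hk₁ : k₁ ≠ 0) (hcirc : ∀ x ∈ I, (k₁ * x + k₂) ^ 2 + (k₁ * u x + k₃) ^ 2 = 1) :
    ∀ x ∈ I, k₁ * x + k₂ + u₁ x * (k₁ * u x + k₃) = 0 := by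
  intro x hx
  have hderiv := (((((hasDerivAt_id' x).const_mul k₁).add_const k₂).pow 2).add
    ((((hu x hx).const_mul k₁).add_const k₃).pow 2)).sub_const 1
  have h := hderiv.eq_zero_of_eventuallyEq_zero
    (eventuallyEq_of_mem (hI.mem_nhds hx) fun y hy => sub_eq_zero.mpr (hcirc y hy))
  have h' : 2 * k₁ * (k₁ * x + k₂ + u₁ x * (k₁ * u x + k₃)) = 0 := by
    linear_combination h
  exact (mul_eq_zero.mp h').resolve_left (mul_ne_zero two_ne_zero hk₁)

theorem circleArc_deriv_two (hI : IsOpen I) (hu : ∀ x ∈ I, HasDerivAt u (u₁ x) x)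
    (hu₁ : ∀ x ∈ I, HasDerivAt u₁ (u₂ x) x)
    (h₁ : ∀ x ∈ I, k₁ * x + k₂ + u₁ x * (k₁ * u x + k₃) = 0) :
    ∀ x ∈ I, u₂ x * (k₁ * u x + k₃) + k₁ * (1 + u₁ x ^ 2) = 0 := by
  intro x hx
  have hderiv := (((hasDerivAt_id' x).const_mul k₁).add_const k₂).add
    ((hu₁ x hx).mul (((hu x hx).const_mul k₁).add_const k₃))
  have h := hderiv.eq_zero_of_eventuallyEq_zero (eventuallyEq_of_mem (hI.mem_nhds hx) h₁)
  linear_combination h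

theorem circleArc_deriv_three (hI : IsOpen I) (hu : ∀ x ∈ I, HasDerivAt u (u₁ x) x)
    (hu₁ : ∀ x ∈ I, HasDerivAt u₁ (u₂ x) x) (hu₂ : ∀ x ∈ I, HasDerivAt u₂ (u₃ x) x)
    (h₂ : ∀ x ∈ I, u₂ x * (k₁ * u x + k₃) + k₁ * (1 + u₁ x ^ 2) = 0) :
    ∀ x ∈ I, u₃ x * (k₁ * u x + k₃) + 3 * k₁ * u₁ x * u₂ x = 0 := by
  intro x hx
  have hderiv := ((hu₂ x hx).mul (((hu x hx).const_mul k₁).add_const k₃)).add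
    (((hasDerivAt_const x (1 : ℝ)).add ((hu₁ x hx).pow 2)).const_mul k₁)
  have h := hderiv.eq_zero_of_eventuallyEq_zero (eventuallyEq_of_mem (hI.mem_nhds hx) h₂)
  linear_combination h

end CircleArc

theorem eq_div_of_circleArc_relations {v u₁ u₂ u₃ k : ℝ} (hv : v ≠ 0)
    (h₂ : u₂ * v + k * (1 + u₁ ^ 2) = 0) (h₃ : u₃ * v + 3 * k * u₁ * u₂ = 0) :
    u₃ = 3 * u₁ * u₂ ^ 2 / (1 + u₁ ^ 2) := by
  rw [eq_div_iff (by positivity)]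
  refine mul_left_cancel₀ hv ?_
  linear_combination (1 + u₁ ^ 2) * h₃ - 3 * u₁ * u₂ * h₂

theorem stmt_8_general (I : Set ℝ) (hI : IsOpen I)
    (u : ℝ → ℝ) (hu : ContDiffOn ℝ (⊤ : ℕ∞) u I)
    (k₁ k₂ k₃ : ℝ) (hk₁ : k₁ ≠ 0)
    (hcirc : ∀ x ∈ I, (k₁ * x + k₂) ^ 2 + (k₁ * u x + k₃) ^ 2 = 1)
    (hne : ∀ x ∈ I, k₁ * u x + k₃ ≠ 0) :
    ∀ x ∈ I, iteratedDeriv 3 u x =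
      3 * deriv u x * (iteratedDeriv 2 u x) ^ 2 / (1 + (deriv u x) ^ 2) := by
  have hD : ∀ m : ℕ, ∀ x ∈ I, HasDerivAt (iteratedDeriv m u) (iteratedDeriv (m + 1) u x) x :=
    fun m x hx => hu.hasDerivAt_iteratedDeriv hI (by exact_mod_cast WithTop.coe_lt_top _) hx
  have hu₀ : ∀ x ∈ I, HasDerivAt u (iteratedDeriv 1 u x) x := by
    simpa only [iteratedDeriv_zero] using hD 0
  have h₁ := circleArc_deriv_one hI hu₀ hk₁ hcirc
  have h₂ := circleArc_deriv_two hI hu₀ (hD 1) h₁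
  have h₃ := circleArc_deriv_three hI hu₀ (hD 1) (hD 2) h₂
  intro x hx
  rw [← iteratedDeriv_one]
  exact eq_div_of_circleArc_relations (hne x hx) (h₂ x hx) (h₃ x hx)

theorem stmt_8 (I : Set ℝ) (hI : IsOpen I) (hI' : I.OrdConnected)
    (u : ℝ → ℝ) (hu : ContDiffOn ℝ (⊤ : ℕ∞) u I)
    (k₁ k₂ k₃ : ℝ) (hk₁ : k₁ ≠ 0)
    (hcirc : ∀ x ∈ I, (k₁ * x + k₂) ^ 2 + (k₁ * u x + k₃) ^ 2 = 1)
    (hne : ∀ x ∈ I, k₁ * u x + k₃ ≠ 0) :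
    ∀ x ∈ I, iteratedDeriv 3 u x =
      3 * deriv u x * (iteratedDeriv 2 u x) ^ 2 / (1 + (deriv u x) ^ 2) :=
  stmt_8_general I hI u hu k₁ k₂ k₃ hk₁ hcirc hne
end
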